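/- Let Q_l = [[a² + 2a/b, a²/b], [a, 2a/b]] with a, b nonzero reals and ab + 4 ≠ 0. Then for all n ≥ 1, Q_l^n = (a/b)^n (ab+4)^(n/2) [[q_{n+1}, q_n], [(b/a) q_n, q_{n−1}]] if n is even, and Q_l^n = (a/b)^n (ab+4)^((n−1)/2) [[l_{n+1}, l_n], [(b/a) l_n, l_{n−1}]] if n is odd, where q_k and l_k are the bi-periodic Fibonacci and Lucas sequences. -/

import Mathlib

/-- Bi-periodic Fibonacci sequence: q 0 = 0, q 1 = 1,
    q n = a * q (n-1) + q (n-2) if n even, q n = b * q (n-1) + q (n-2) if n odd. -/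
def bpFib (a b : ℝ) : ℕ → ℝ
  | 0 => 0
  | 1 => 1
  | n + 2 => (if Even (n + 2) then a else b) * bpFib a b (n + 1) + bpFib a b n

/-- Bi-periodic Lucas sequence: l 0 = 2, l 1 = a,
    l n = b * l (n-1) + l (n-2) if n even, l n = a * l (n-1) + l (n-2) if n odd. -/
def bpLucas (a b : ℝ) : ℕ → ℝ
  | 0 => 2
  | 1 => a
  | n + 2 => (if Even (n + 2) then b else a) * bpLucas a b (n + 1) + bpLucas a b n

/-!
With `c n = a` for even `n` and `c n = b` for odd `n`, both sequences obey the recurrence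
`s (n + 2) = c n * s (n + 1) + s n` up to a shift of `c`, and `l n = 2 q (n + 1) - c (n + 1) q n`.
Write `F n` and `L n` for the matrices `[[s (n+1), s n], [(b/a) s n, s (n-1)]]` with `s = q`
and `s = l`. Then `Q_l = (a/b) L 1`, and the recurrences give, entry by entry,
`F n * L 1 = L (n + 1)` for even `n` and `L n * L 1 = (ab + 4) F (n + 1)` for odd `n`;
multiplying by `L 1` alternately through these two rules yields both formulas.
-/

section

variable (a b : ℝ)

def bpCoeff (n : ℕ) : ℝ := if Even n then a else b

noncomputable def bpMatrix (s : ℕ → ℝ) (n : ℕ) : Matrix (Fin 2) (Fin 2) ℝ :=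
  !![s (n + 1), s n; b / a * s n, s (n - 1)]

variable {a b}

theorem bpCoeff_of_even {n : ℕ} (hn : Even n) : bpCoeff a b n = a := if_pos hn

theorem bpCoeff_of_odd {n : ℕ} (hn : Odd n) : bpCoeff a b n = b :=
  if_neg (Nat.not_even_iff_odd.mpr hn)

theorem bpCoeff_add_two (n : ℕ) : bpCoeff a b (n + 2) = bpCoeff a b n := by
  simp [bpCoeff, Nat.even_add]

theorem bpFib_add_two (n : ℕ) :
    bpFib a b (n + 2) = bpCoeff a b n * bpFib a b (n + 1) + bpFib a b n := by
  rw [bpFib, ← bpCoeff, bpCoeff_add_two]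

theorem bpLucas_add_two (n : ℕ) :
    bpLucas a b (n + 2) = bpCoeff a b (n + 1) * bpLucas a b (n + 1) + bpLucas a b n := by
  by_cases hn : Even n <;> simp [bpLucas, bpCoeff, hn, Nat.even_add_one]

theorem bpLucas_eq (n : ℕ) :
    bpLucas a b n = 2 * bpFib a b (n + 1) - bpCoeff a b (n + 1) * bpFib a b n := by
  induction n using Nat.twoStepInduction with
  | zero => simp [bpLucas, bpFib]
  | one => simp [bpLucas, bpFib, bpCoeff]; ring
  | more n ih₁ ih₂ =>
    rw [bpLucas_add_two, ih₂, ih₁, bpFib_add_two (n + 1), bpFib_add_two n]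
    simp only [bpCoeff_add_two]
    ring

theorem bpMatrix_bpLucas_one (ha : a ≠ 0) :
    bpMatrix a b (bpLucas a b) 1 = !![a * b + 2, a; b, 2] := by
  ext i k
  fin_cases i <;> fin_cases k <;> simp [bpMatrix, bpLucas, ha]
  ring

theorem bpMatrix_bpFib_mul_bpMatrix_bpLucas_one (ha : a ≠ 0) {j : ℕ} (hj : Odd j) :
    bpMatrix a b (bpFib a b) (j + 1) * bpMatrix a b (bpLucas a b) 1 =
      bpMatrix a b (bpLucas a b) (j + 2) := by
  rw [bpMatrix_bpLucas_one ha]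
  ext i k
  fin_cases i <;> fin_cases k <;>
    simp [bpMatrix, Matrix.mul_apply, Fin.sum_univ_two, bpLucas_eq, bpFib_add_two,
      bpCoeff_add_two, bpCoeff_of_odd hj, bpCoeff_of_even hj.add_one] <;>
    field_simp <;> ring

theorem bpMatrix_bpLucas_mul_bpMatrix_bpLucas_one (ha : a ≠ 0) {j : ℕ} (hj : Even j) :
    bpMatrix a b (bpLucas a b) (j + 1) * bpMatrix a b (bpLucas a b) 1 =
      (a * b + 4) • bpMatrix a b (bpFib a b) (j + 2) := by
  rw [bpMatrix_bpLucas_one ha]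
  ext i k
  fin_cases i <;> fin_cases k <;>
    simp [bpMatrix, Matrix.mul_apply, Fin.sum_univ_two, bpLucas_eq, bpFib_add_two,
      bpCoeff_add_two, bpCoeff_of_even hj, bpCoeff_of_odd hj.add_one] <;>
    field_simp <;> ring

theorem bpMatrix_bpLucas_one_pow_two_mul_add_one (ha : a ≠ 0) (k : ℕ) :
    bpMatrix a b (bpLucas a b) 1 ^ (2 * k + 1) =
      (a * b + 4) ^ k • bpMatrix a b (bpLucas a b) (2 * k + 1) := by
  induction k with
  | zero => simp
  | succ k ih =>
    rw [show 2 * (k + 1) + 1 = 2 * k + 1 + 1 + 1 by ring, pow_succ, pow_succ, ih,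
      smul_mul_assoc, smul_mul_assoc,
      bpMatrix_bpLucas_mul_bpMatrix_bpLucas_one ha (even_two_mul k), smul_mul_assoc,
      bpMatrix_bpFib_mul_bpMatrix_bpLucas_one ha (odd_two_mul_add_one k), smul_smul, pow_succ]

theorem bpMatrix_bpLucas_one_pow_two_mul_add_two (ha : a ≠ 0) (k : ℕ) :
    bpMatrix a b (bpLucas a b) 1 ^ (2 * k + 2) =
      (a * b + 4) ^ (k + 1) • bpMatrix a b (bpFib a b) (2 * k + 2) := by
  rw [pow_succ, bpMatrix_bpLucas_one_pow_two_mul_add_one ha, smul_mul_assoc,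
    bpMatrix_bpLucas_mul_bpMatrix_bpLucas_one ha (even_two_mul k), smul_smul, pow_succ]

end

theorem Ql_pow_general (a b : ℝ) (ha : a ≠ 0) (hb : b ≠ 0)
    (n : ℕ) (hn : 1 ≤ n) :
    (Even n →
      (!![a ^ 2 + 2 * a / b, a ^ 2 / b; a, 2 * a / b] : Matrix (Fin 2) (Fin 2) ℝ) ^ n =
        ((a / b) ^ n * (a * b + 4) ^ (n / 2)) •
          !![bpFib a b (n + 1), bpFib a b n;
             (b / a) * bpFib a b n, bpFib a b (n - 1)]) ∧
    (Odd n →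
      (!![a ^ 2 + 2 * a / b, a ^ 2 / b; a, 2 * a / b] : Matrix (Fin 2) (Fin 2) ℝ) ^ n =
        ((a / b) ^ n * (a * b + 4) ^ ((n - 1) / 2)) •
          !![bpLucas a b (n + 1), bpLucas a b n;
             (b / a) * bpLucas a b n, bpLucas a b (n - 1)]) := by
  have hQ : (!![a ^ 2 + 2 * a / b, a ^ 2 / b; a, 2 * a / b] : Matrix (Fin 2) (Fin 2) ℝ) =
      (a / b) • bpMatrix a b (bpLucas a b) 1 := by
    rw [bpMatrix_bpLucas_one ha]
    ext i k
    fin_cases i <;> fin_cases k <;> simp <;> field_simp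
  rw [hQ, smul_pow]
  constructor
  · rintro ⟨k, rfl⟩
    obtain ⟨k, rfl⟩ : ∃ m, k = m + 1 := ⟨k - 1, by omega⟩
    rw [show k + 1 + (k + 1) = 2 * k + 2 by ring, bpMatrix_bpLucas_one_pow_two_mul_add_two ha,
      smul_smul, show (2 * k + 2) / 2 = k + 1 by omega]
    rfl
  · rintro ⟨k, rfl⟩
    rw [bpMatrix_bpLucas_one_pow_two_mul_add_one ha, smul_smul,
      show (2 * k + 1 - 1) / 2 = k by omega]
    rfl

theorem Ql_pow (a b : ℝ) (ha : a ≠ 0) (hb : b ≠ 0) (hab : a * b + 4 ≠ 0)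
    (n : ℕ) (hn : 1 ≤ n) :
    (Even n →
      (!![a ^ 2 + 2 * a / b, a ^ 2 / b; a, 2 * a / b] : Matrix (Fin 2) (Fin 2) ℝ) ^ n =
        ((a / b) ^ n * (a * b + 4) ^ (n / 2)) •
          !![bpFib a b (n + 1), bpFib a b n;
             (b / a) * bpFib a b n, bpFib a b (n - 1)]) ∧
    (Odd n →
      (!![a ^ 2 + 2 * a / b, a ^ 2 / b; a, 2 * a / b] : Matrix (Fin 2) (Fin 2) ℝ) ^ n =
        ((a / b) ^ n * (a * b + 4) ^ ((n - 1) / 2)) •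
          !![bpLucas a b (n + 1), bpLucas a b n;
             (b / a) * bpLucas a b n, bpLucas a b (n - 1)]) :=
  Ql_pow_general a b ha hb n hn
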